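/- Realizable output from boosting with coVC bound: Let H be a class with coVC dimension k, and let h_1, ..., h_T ∈ H. Define K = {x ∈ X : more than a (1 − 1/(2(k+1))) fraction of the h_t's agree on x}, and let g: K → {±1} assign the majority vote of the h_t's. Then every finite sample of examples (x, g(x)) with x ∈ K is realizable by H; consequently if H is closed (in the product topology on {±1}^X), there exists h* ∈ H with h*(x) = g(x) for all x ∈ K. -/
import Mathlib


/-- A sample is realizable by the class H. -/
def Realizable {X : Type*} (H : Set (X → Bool)) (S : List (X × Bool)) : Prop :=
  ∃ h ∈ H, ∀ z ∈ S, h z.1 = z.2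

/-- The majority vote of the hypotheses h_1, ..., h_T at x. -/
def maj {X : Type*} (T : ℕ) (h : Fin T → X → Bool) (x : X) : Bool :=
  decide (T < 2 * (Finset.univ.filter (fun t : Fin T => h t x = true)).card)

/-- The set of points on which more than a (1 − 1/(2(k+1))) fraction of the
h_t's agree. -/
def Kset {X : Type*} (k T : ℕ) (h : Fin T → X → Bool) : Set X :=
  {x | (1 - 1 / (2 * ((k : ℝ) + 1))) * T <
    ((Finset.univ.filter (fun t : Fin T => h t x = maj T h x)).card : ℝ)}

/-- Realizable output from boosting with coVC bound: if H has coVC dimension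
(at most) k and h_1, ..., h_T ∈ H, then every finite sample labelled by the
majority vote on points of K is realizable by H; consequently, if H is closed
in the product topology, some h* ∈ H agrees with the majority vote on all of
K. -/
theorem realizable_majority_of_covc {X : Type*} (H : Set (X → Bool)) (k : ℕ)
    (hcovc : ∀ S : List (X × Bool), ¬ Realizable H S →
      ∃ S', (∀ z ∈ S', z ∈ S) ∧ S'.length ≤ k ∧ ¬ Realizable H S')
    (T : ℕ) (hT : 0 < T) (h : Fin T → X → Bool) (hh : ∀ t, h t ∈ H) :
    (∀ S : List (X × Bool),
      (∀ z ∈ S, z.1 ∈ Kset k T h ∧ z.2 = maj T h z.1) → Realizable H S) ∧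
    (IsClosed H → ∃ h' ∈ H, ∀ x ∈ Kset k T h, h' x = maj T h x) := by
  classical
  have part1 : ∀ S : List (X × Bool),
      (∀ z ∈ S, z.1 ∈ Kset k T h ∧ z.2 = maj T h z.1) → Realizable H S := by
    intro S hS
    by_contra hnr
    obtain ⟨S', hsub, hlen, hnr'⟩ := hcovc S hnr
    -- every hypothesis errs somewhere on S'
    have herr : ∀ t : Fin T, ∃ z ∈ S', h t z.1 ≠ z.2 := by
      intro t
      by_contra hc
      push_neg at hc
      exact hnr' ⟨h t, hh t, hc⟩
    choose f hf1 hf2 using herr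
    set F : Finset (X × Bool) := S'.toFinset with hF
    have hmaps : ∀ t : Fin T, t ∈ (Finset.univ : Finset (Fin T)) → f t ∈ F :=
      fun t _ => List.mem_toFinset.2 (hf1 t)
    have hsum : T = ∑ z ∈ F, (Finset.univ.filter (fun t : Fin T => f t = z)).card := by
      have := Finset.card_eq_sum_card_fiberwise hmaps
      simpa using this
    -- pigeonhole: some z receives at least T / |S'| of the hypotheses
    have hpig : ∃ z ∈ F, T ≤ S'.length *
        (Finset.univ.filter (fun t : Fin T => f t = z)).card := by
      by_contra hc
      push_neg at hc
      have hFne : F.Nonempty := by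
        rcases Finset.eq_empty_or_nonempty F with hFe | hFe
        · rw [hFe] at hsum; simp at hsum; omega
        · exact hFe
      have h1 : S'.length * T = ∑ z ∈ F,
          S'.length * (Finset.univ.filter (fun t : Fin T => f t = z)).card := by
        have := congrArg (fun n => S'.length * n) hsum
        simpa [Finset.mul_sum] using this
      have h2 : ∑ z ∈ F, S'.length * (Finset.univ.filter (fun t : Fin T => f t = z)).card
          < ∑ _z ∈ F, T := Finset.sum_lt_sum_of_nonempty hFne (fun z hz => hc z hz)
      have h3 : ∑ _z ∈ F, T = F.card * T := by simp [Finset.sum_const, mul_comm]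
      have h4 : F.card ≤ S'.length := List.toFinset_card_le S'
      have : S'.length * T < S'.length * T := by
        calc S'.length * T = _ := h1
        _ < F.card * T := by rw [← h3]; exact h2
        _ ≤ S'.length * T := Nat.mul_le_mul_right T h4
      omega
    obtain ⟨z, hzF, hzT⟩ := hpig
    have hzS' : z ∈ S' := List.mem_toFinset.1 hzF
    have hzS : z ∈ S := hsub z hzS'
    obtain ⟨hzK, hzmaj⟩ := hS z hzS
    -- number of errors at z
    set E := (Finset.univ.filter (fun t : Fin T => ¬ (h t z.1 = maj T h z.1))).card with hE
    set A := (Finset.univ.filter (fun t : Fin T => h t z.1 = maj T h z.1)).card with hA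
    have hAE : A + E = T := by
      simpa using Finset.card_filter_add_card_filter_not
        (s := (Finset.univ : Finset (Fin T))) (p := fun t : Fin T => h t z.1 = maj T h z.1)
    have hfibsub : (Finset.univ.filter (fun t : Fin T => f t = z)).card ≤ E := by
      apply Finset.card_le_card
      intro t ht
      simp only [Finset.mem_filter, Finset.mem_univ, true_and] at ht ⊢
      intro hcontra
      apply hf2 t
      rw [ht, hzmaj]
      exact hcontra
    have hkE : T ≤ k * E :=
      le_trans hzT (Nat.mul_le_mul hlen hfibsub)
    -- Kset bound
    have hK : (1 - 1 / (2 * ((k : ℝ) + 1))) * T < (A : ℝ) := hzK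
    have hc : (0 : ℝ) < 2 * ((k : ℝ) + 1) := by positivity
    have hK' : (2 * ((k : ℝ) + 1) - 1) * T < 2 * ((k : ℝ) + 1) * A := by
      have := mul_lt_mul_of_pos_left hK hc
      have heq : 2 * ((k : ℝ) + 1) * ((1 - 1 / (2 * ((k : ℝ) + 1))) * T)
          = (2 * ((k : ℝ) + 1) - 1) * T := by
        field_simp
      linarith [heq ▸ this]
    have hkE' : (T : ℝ) ≤ (k : ℝ) * E := by exact_mod_cast hkE
    have hAE' : (A : ℝ) + E = T := by exact_mod_cast hAE
    have hT' : (0 : ℝ) < T := by exact_mod_cast hT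
    have hEnn : (0 : ℝ) ≤ E := Nat.cast_nonneg E
    nlinarith [hK', hkE', hAE', hT', hEnn]
  refine ⟨part1, fun hcl => ?_⟩
  have hcomp : IsCompact H := hcl.isCompact
  have hne := IsCompact.inter_iInter_nonempty hcomp
    (fun x : Kset k T h => {f : X → Bool | f x.1 = maj T h x.1})
    (fun x => by
      show IsClosed {f : X → Bool | f x.1 = maj T h x.1}
      have heq : {f : X → Bool | f x.1 = maj T h x.1}
          = (fun f : X → Bool => f x.1) ⁻¹' {maj T h x.1} := rfl
      rw [heq]
      exact isClosed_singleton.preimage (continuous_apply x.1))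
    (by
      intro u
      obtain ⟨g, hg, hgz⟩ := part1 (u.toList.map fun i => (i.1, maj T h i.1))
        (by
          intro z hz
          simp only [List.mem_map, Finset.mem_toList] at hz
          obtain ⟨i, _, rfl⟩ := hz
          exact ⟨i.2, rfl⟩)
      refine ⟨g, hg, ?_⟩
      simp only [Set.mem_iInter]
      intro i hi
      exact hgz (i.1, maj T h i.1)
        (List.mem_map.2 ⟨i, Finset.mem_toList.2 hi, rfl⟩))
  obtain ⟨h', hh'H, hh'⟩ := hne
  refine ⟨h', hh'H, fun x hx => ?_⟩
  exact Set.mem_iInter.1 hh' ⟨x, hx⟩
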